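/- arXiv:2209.05808 — 5 statements merged into one kernel-verified Lean document; each statement's English description precedes it below -/
import Mathlib

section
/- Let V be a finite-dimensional real inner product space with inner product (·,·), let K, M : V → V be symmetric positive definite linear operators, and write |v|²_K = (Kv,v), |v|²_M = (Mv,v), |f|²_{M^{−1}} = (M^{−1}f,f). Let W ⊆ V be a subspace, and suppose there is a constant Λ > 0 such that |w|_M ≤ Λ |w|_K for all w ∈ W. Let W^{⊥K} = {v ∈ V : (Kv,w) = 0 for all w ∈ W}. If u ∈ V satisfies (Ku,v) = (f,v) for all v ∈ V and u_H ∈ W^{⊥K} satisfies (Ku_H,v) = (f,v) for all v ∈ W^{⊥K}, then |u − u_H|_K ≤ Λ |f|_{M^{−1}}. (This is the ideal multiscale error bound, Lemma 4.2, with Λ = C_{α,d,μ,σ} H supplied by the interpolation estimate.) -/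
open RealInnerProductSpace

/-! The Galerkin error `e = u - u_H` is `K`-orthogonal to `W^{⊥K}`, hence lies in
`(W^{⊥K})^{⊥K} = W`. Since `u_H` is `K`-orthogonal to `W`, `|e|_K² = (f, e) = (M M⁻¹f, e)`,
and Cauchy–Schwarz for the form of `M` together with `|e|_M ≤ Λ |e|_K` on `W` gives
`|e|_K² ≤ Λ |f|_{M⁻¹} |e|_K`. -/

namespace LinearMap

variable {V : Type*} [NormedAddCommGroup V] [InnerProductSpace ℝ V]

theorem isPositive_of_inner_map_self_pos {T : V →ₗ[ℝ] V} (hT : T.IsSymmetric)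
    (hpos : ∀ v : V, v ≠ 0 → 0 < ⟪T v, v⟫) : T.IsPositive := by
  refine (isPositive_iff T).mpr ⟨hT, fun v => ?_⟩
  rcases eq_or_ne v 0 with rfl | hv
  · simp
  · exact (hpos v hv).le

theorem injective_of_inner_map_self_pos {T : V →ₗ[ℝ] V}
    (hpos : ∀ v : V, v ≠ 0 → 0 < ⟪T v, v⟫) : Function.Injective T := by
  refine (injective_iff_map_eq_zero T).mpr fun v hv => ?_
  by_contra hv0
  simpa [hv] using hpos v hv0

theorem IsPositive.real_inner_mul_inner_self_le {T : V →ₗ[ℝ] V} (hT : T.IsPositive)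
    (x y : V) :
    ⟪T x, y⟫ * ⟪T x, y⟫ ≤ ⟪T x, x⟫ * ⟪T y, y⟫ := by
  have hdiscrim : discrim ⟪T y, y⟫ (2 * ⟪T x, y⟫) ⟪T x, x⟫ ≤ 0 := by
    refine discrim_le_zero fun t => ?_
    have hquad := hT.inner_nonneg_left (x + t • y)
    have hyx : ⟪T y, x⟫ = ⟪T x, y⟫ := by rw [hT.isSymmetric, real_inner_comm]
    simp only [map_add, map_smul, inner_add_left, inner_add_right, real_inner_smul_left,
      real_inner_smul_right, hyx] at hquad
    linarith
  rw [discrim] at hdiscrim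
  linarith

theorem IsPositive.real_inner_le_sqrt_mul_sqrt {T : V →ₗ[ℝ] V} (hT : T.IsPositive) (x y : V) :
    ⟪T x, y⟫ ≤ √⟪T x, x⟫ * √⟪T y, y⟫ := by
  rw [← Real.sqrt_mul (hT.inner_nonneg_left x)]
  exact (le_abs_self _).trans <|
    Real.abs_le_sqrt (by simpa [sq] using hT.real_inner_mul_inner_self_le x y)

/-- For symmetric `K`, the `K`-orthogonal complement of `W` is the orthogonal complement of
`K W`, so the `K`-orthogonal complement of that complement is `K⁻¹ (K W)ᗮᗮ = W`. -/
theorem IsSymmetric.mem_of_forall_inner_map_eq_zero {K : V →ₗ[ℝ] V} (hK : K.IsSymmetric)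
    (hK_inj : Function.Injective K) {W : Submodule ℝ V} [(W.map K).HasOrthogonalProjection]
    {e : V} (he : ∀ v : V, (∀ w ∈ W, ⟪K v, w⟫ = 0) → ⟪K e, v⟫ = 0) : e ∈ W := by
  have hKe : K e ∈ (W.map K)ᗮᗮ := by
    refine (Submodule.mem_orthogonal _ _).mpr fun v hv => ?_
    rw [real_inner_comm]
    refine he v fun w hw => ?_
    rw [hK]
    exact (Submodule.mem_orthogonal' _ _).mp hv _ (Submodule.mem_map_of_mem hw)
  rw [Submodule.orthogonal_orthogonal] at hKe
  obtain ⟨w, hw, hKw⟩ := hKe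
  exact hK_inj hKw ▸ hw

end LinearMap

theorem ideal_multiscale_error_bound_general
    {V : Type*} [NormedAddCommGroup V] [InnerProductSpace ℝ V] [FiniteDimensional ℝ V]
    (K M Minv : V →ₗ[ℝ] V)
    (hKsymm : ∀ u v : V, ⟪K u, v⟫ = ⟪u, K v⟫)
    (hKpos : ∀ v : V, v ≠ 0 → 0 < ⟪K v, v⟫)
    (hMsymm : ∀ u v : V, ⟪M u, v⟫ = ⟪u, M v⟫)
    (hMpos : ∀ v : V, v ≠ 0 → 0 < ⟪M v, v⟫)
    (hMinv₁ : M ∘ₗ Minv = LinearMap.id)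
    (W : Submodule ℝ V) (Λ : ℝ) (hΛ : 0 < Λ)
    (hW : ∀ w ∈ W, Real.sqrt ⟪M w, w⟫ ≤ Λ * Real.sqrt ⟪K w, w⟫)
    (f u uH : V)
    (hu : ∀ v : V, ⟪K u, v⟫ = ⟪f, v⟫)
    (huH_mem : ∀ w ∈ W, ⟪K uH, w⟫ = 0)
    (huH : ∀ v : V, (∀ w ∈ W, ⟪K v, w⟫ = 0) → ⟪K uH, v⟫ = ⟪f, v⟫) :
    Real.sqrt ⟪K (u - uH), u - uH⟫ ≤ Λ * Real.sqrt ⟪Minv f, f⟫ := by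
  set e := u - uH
  have hK := LinearMap.isPositive_of_inner_map_self_pos hKsymm hKpos
  have he : e ∈ W := LinearMap.IsSymmetric.mem_of_forall_inner_map_eq_zero hKsymm
    (LinearMap.injective_of_inner_map_self_pos hKpos) fun v hv => by
      rw [map_sub, inner_sub_left, hu, huH v hv, sub_self]
  have hM := LinearMap.isPositive_of_inner_map_self_pos hMsymm hMpos
  have hf : M (Minv f) = f := LinearMap.congr_fun hMinv₁ f
  have hMinv_f : ⟪Minv f, f⟫ = ⟪M (Minv f), Minv f⟫ := by rw [hf, real_inner_comm]
  have henergy : √⟪K e, e⟫ * √⟪K e, e⟫ ≤ Λ * √⟪Minv f, f⟫ * √⟪K e, e⟫ :=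
    calc √⟪K e, e⟫ * √⟪K e, e⟫ = ⟪f, e⟫ := by
          rw [Real.mul_self_sqrt (hK.inner_nonneg_left e), map_sub, inner_sub_left, hu,
            huH_mem e he, sub_zero]
      _ ≤ √⟪Minv f, f⟫ * √⟪M e, e⟫ := by
          simpa only [hf, hMinv_f] using hM.real_inner_le_sqrt_mul_sqrt (Minv f) e
      _ ≤ Λ * √⟪Minv f, f⟫ * √⟪K e, e⟫ := by
          rw [mul_assoc, mul_left_comm]
          exact mul_le_mul_of_nonneg_left (hW e he) (Real.sqrt_nonneg _)
  nlinarith [Real.sqrt_nonneg ⟪K e, e⟫, mul_nonneg hΛ.le (Real.sqrt_nonneg ⟪Minv f, f⟫)]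

/-- **Ideal multiscale error bound (Lemma 4.2, abstract form).**
Let `V` be a finite-dimensional real inner product space, `K, M : V → V`
symmetric positive definite linear operators (with `Minv` the inverse of `M`),
`W ⊆ V` a subspace on which `|w|_M ≤ Λ |w|_K`, and `W^{⊥K}` the `K`-orthogonal
complement of `W`.  If `u` solves `(Ku,v) = (f,v)` for all `v ∈ V` and
`u_H ∈ W^{⊥K}` is its Galerkin approximation in `W^{⊥K}`, then
`|u − u_H|_K ≤ Λ |f|_{M⁻¹}`. -/
theorem ideal_multiscale_error_bound
    {V : Type*} [NormedAddCommGroup V] [InnerProductSpace ℝ V] [FiniteDimensional ℝ V]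
    (K M Minv : V →ₗ[ℝ] V)
    (hKsymm : ∀ u v : V, ⟪K u, v⟫ = ⟪u, K v⟫)
    (hKpos : ∀ v : V, v ≠ 0 → 0 < ⟪K v, v⟫)
    (hMsymm : ∀ u v : V, ⟪M u, v⟫ = ⟪u, M v⟫)
    (hMpos : ∀ v : V, v ≠ 0 → 0 < ⟪M v, v⟫)
    (hMinv₁ : M ∘ₗ Minv = LinearMap.id) (hMinv₂ : Minv ∘ₗ M = LinearMap.id)
    (W : Submodule ℝ V) (Λ : ℝ) (hΛ : 0 < Λ)
    (hW : ∀ w ∈ W, Real.sqrt ⟪M w, w⟫ ≤ Λ * Real.sqrt ⟪K w, w⟫)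
    (f u uH : V)
    (hu : ∀ v : V, ⟪K u, v⟫ = ⟪f, v⟫)
    (huH_mem : ∀ w ∈ W, ⟪K uH, w⟫ = 0)
    (huH : ∀ v : V, (∀ w ∈ W, ⟪K v, w⟫ = 0) → ⟪K uH, v⟫ = ⟪f, v⟫) :
    Real.sqrt ⟪K (u - uH), u - uH⟫ ≤ Λ * Real.sqrt ⟪Minv f, f⟫ :=
  ideal_multiscale_error_bound_general K M Minv hKsymm hKpos hMsymm hMpos hMinv₁ W Λ hΛ hW f u uH hu
    huH_mem huH
end

section
/- Let W be a finite-dimensional real inner product space, W_1,…,W_m subspaces with W = W_1 + ⋯ + W_m, and P_j : W → W_j the orthogonal projection onto W_j; set P = Σ_{j=1}^m P_j. Suppose there are constants C_1, C_2 > 0 such that (i) for all w_1 ∈ W_1, …, w_m ∈ W_m: ‖Σ_j w_j‖² ≤ C_2 Σ_j ‖w_j‖², and (ii) every w ∈ W admits a decomposition w = Σ_j w_j with w_j ∈ W_j and Σ_j ‖w_j‖² ≤ C_1 ‖w‖². Then C_1^{−1} ‖w‖² ≤ ⟨Pw, w⟩ ≤ C_2 ‖w‖² for all w ∈ W. -/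
open RealInnerProductSpace

/-- **Additive Schwarz bounds (Lemma 4.5, abstract form).**
Let `W` be a finite-dimensional real inner product space, `W₁, …, W_m`
subspaces with `W = W₁ + ⋯ + W_m`, `P_j` the orthogonal projection onto `W_j`
and `P = Σ_j P_j`.  If every tuple `w_j ∈ W_j` satisfies
`‖Σ_j w_j‖² ≤ C₂ Σ_j ‖w_j‖²`, and every `w` admits a decomposition
`w = Σ_j w_j`, `w_j ∈ W_j`, with `Σ_j ‖w_j‖² ≤ C₁ ‖w‖²`, then
`C₁⁻¹ ‖w‖² ≤ ⟨P w, w⟩ ≤ C₂ ‖w‖²` for all `w ∈ W`. -/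
theorem additive_schwarz_norm_equivalence
    {W : Type*} [NormedAddCommGroup W] [InnerProductSpace ℝ W] [FiniteDimensional ℝ W]
    {m : ℕ} (Wj : Fin m → Submodule ℝ W)
    (hspan : (⨆ j, Wj j) = (⊤ : Submodule ℝ W))
    (C₁ C₂ : ℝ) (hC₁ : 0 < C₁) (hC₂ : 0 < C₂)
    (hupper : ∀ w : Fin m → W, (∀ j, w j ∈ Wj j) →
      ‖∑ j, w j‖ ^ 2 ≤ C₂ * ∑ j, ‖w j‖ ^ 2)
    (hlower : ∀ w : W, ∃ wdec : Fin m → W, (∀ j, wdec j ∈ Wj j) ∧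
      w = ∑ j, wdec j ∧ ∑ j, ‖wdec j‖ ^ 2 ≤ C₁ * ‖w‖ ^ 2) :
    ∀ w : W,
      C₁⁻¹ * ‖w‖ ^ 2 ≤ ⟪∑ j, ((Wj j).subtypeL ∘L (Wj j).orthogonalProjection) w, w⟫ ∧
      ⟪∑ j, ((Wj j).subtypeL ∘L (Wj j).orthogonalProjection) w, w⟫ ≤ C₂ * ‖w‖ ^ 2 := by
  intro w
  set Pw : Fin m → W := fun j => ((Wj j).subtypeL ∘L (Wj j).orthogonalProjection) w with hPw
  have hPmem : ∀ j, Pw j ∈ Wj j := fun j => ((Wj j).orthogonalProjection w).2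
  -- key projection identity: for u ∈ Wj j, ⟪u, w⟫ = ⟪u, Pw j⟫
  have hinner : ∀ (j : Fin m) (u : W), u ∈ Wj j → ⟪u, w⟫ = ⟪u, Pw j⟫ := by
    intro j u hu
    have h := Submodule.sub_starProjection_mem_orthogonal (K := Wj j) w
    have h0 := (Submodule.mem_orthogonal (Wj j) _).1 h u hu
    have : ⟪u, w - Pw j⟫ = 0 := h0
    rw [inner_sub_right] at this
    linarith
  set S : ℝ := ∑ j, ‖Pw j‖ ^ 2 with hS
  have hSnn : 0 ≤ S := Finset.sum_nonneg fun j _ => sq_nonneg _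
  have hinnersum : ⟪∑ j, Pw j, w⟫ = S := by
    rw [sum_inner]
    refine Finset.sum_congr rfl fun j _ => ?_
    rw [hinner j (Pw j) (hPmem j), real_inner_self_eq_norm_sq]
  rw [hinnersum]
  have hnw : (0:ℝ) ≤ ‖w‖ := norm_nonneg _
  constructor
  · -- lower bound
    obtain ⟨wd, hwdm, hweq, hwdsum⟩ := hlower w
    have hw2 : ‖w‖ ^ 2 = ∑ j, ⟪wd j, Pw j⟫ := by
      rw [← real_inner_self_eq_norm_sq]
      nth_rewrite 1 [hweq]
      rw [sum_inner]
      exact Finset.sum_congr rfl fun j _ => hinner j (wd j) (hwdm j)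
    have hCS : (∑ j, ⟪wd j, Pw j⟫) ^ 2 ≤ (∑ j, ‖wd j‖ ^ 2) * S := by
      have h1 : ∑ j, ⟪wd j, Pw j⟫ ≤ ∑ j, ‖wd j‖ * ‖Pw j‖ :=
        Finset.sum_le_sum fun j _ => real_inner_le_norm _ _
      have h2 : (∑ j, ‖wd j‖ * ‖Pw j‖) ^ 2 ≤ (∑ j, ‖wd j‖ ^ 2) * ∑ j, ‖Pw j‖ ^ 2 :=
        Finset.sum_mul_sq_le_sq_mul_sq Finset.univ _ _
      have h3 : 0 ≤ ∑ j, ‖wd j‖ * ‖Pw j‖ :=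
        Finset.sum_nonneg fun j _ => mul_nonneg (norm_nonneg _) (norm_nonneg _)
      nlinarith [sq_nonneg (∑ j, ⟪wd j, Pw j⟫)]
    have key : (‖w‖ ^ 2) ^ 2 ≤ C₁ * ‖w‖ ^ 2 * S := by
      calc (‖w‖ ^ 2) ^ 2 = (∑ j, ⟪wd j, Pw j⟫) ^ 2 := by rw [hw2]
        _ ≤ (∑ j, ‖wd j‖ ^ 2) * S := hCS
        _ ≤ C₁ * ‖w‖ ^ 2 * S := mul_le_mul_of_nonneg_right hwdsum hSnn
    rcases eq_or_lt_of_le (sq_nonneg ‖w‖) with h0 | h0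
    · rw [← h0]; simpa using hSnn
    · rw [inv_mul_le_iff₀ hC₁]
      nlinarith
  · -- upper bound
    have h1 : ‖∑ j, Pw j‖ ^ 2 ≤ C₂ * S := hupper Pw hPmem
    have h2 : S ≤ ‖∑ j, Pw j‖ * ‖w‖ := hinnersum ▸ real_inner_le_norm _ _
    rcases eq_or_lt_of_le hSnn with h0 | h0
    · nlinarith
    · nlinarith [norm_nonneg (∑ j, Pw j), sq_nonneg (‖∑ j, Pw j‖ - ‖w‖)]
end

section
/- Let G = (N, E) be a spatial network, ω ⊆ Ω a subset, H > 0, and let φ : ℝ^d → ℝ satisfy 0 ≤ φ(z) ≤ 1 for all z and |φ(x) − φ(y)| ≤ H^{−1}|x − y| for all adjacent nodes x ∼ y. Then for every v : N → ℝ, the pointwise product vφ (defined by (vφ)(x) = v(x)φ(x) on N) satisfies |vφ|²_{L,ω} ≤ 2(H^{−2}|v|²_{M,ω} + |v|²_{L,ω}). -/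
/-!
Write `(vφ)(x) - (vφ)(y) = v(x) (φ(x) - φ(y)) + φ(y) (v(x) - v(y))` and use
`(a + b)² ≤ 2a² + 2b²`. Since `|φ| ≤ 1` the second term is bounded by the
`L`-contribution of the edge, while the Lipschitz bound turns the weight `1/|x - y|`
of the first term into `H⁻²|x - y|`, which summed over the neighbours of `x` is the
mass weight `2 m_x`.
-/

noncomputable section
open scoped Classical BigOperators

namespace NetPaper

/-- Euclidean distance between two points of `ℝ^d` (represented as `Fin d → ℝ`). -/
def eDist {d : ℕ} (x y : Fin d → ℝ) : ℝ := Real.sqrt (∑ i, (x i - y i) ^ 2)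

/-- A spatial network: a finite connected graph whose nodes are points of the
hyper-rectangle `Ω = [0,l 1] × ⋯ × [0,l d]`. -/
structure SpatialNetwork (d : ℕ) where
  l : Fin d → ℝ
  l_pos : ∀ i, 0 < l i
  N : Finset (Fin d → ℝ)
  Adj : (Fin d → ℝ) → (Fin d → ℝ) → Prop
  adj_symm : ∀ x y, Adj x y → Adj y x
  adj_mem : ∀ x y, Adj x y → x ∈ N ∧ y ∈ N
  adj_ne : ∀ x y, Adj x y → x ≠ y
  mem_domain : ∀ x ∈ N, ∀ i, 0 ≤ x i ∧ x i ≤ l i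
  connected : ∀ x ∈ N, ∀ y ∈ N, Relation.ReflTransGen Adj x y

namespace SpatialNetwork

variable {d : ℕ}

/-- The hyper-rectangle `Ω`. -/
def domain (G : SpatialNetwork d) : Set (Fin d → ℝ) :=
  {z | ∀ i, 0 ≤ z i ∧ z i ≤ G.l i}

/-- The box `B_R(x)`, half open, but closed to the right in direction `i`
whenever `x i + R = l i`. -/
def box (G : SpatialNetwork d) (R : ℝ) (x : Fin d → ℝ) : Set (Fin d → ℝ) :=
  {z | ∀ i, x i - R ≤ z i ∧ (z i < x i + R ∨ (x i + R = G.l i ∧ z i ≤ x i + R))}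

/-- The nodes lying in a subset `ω ⊆ Ω`. -/
def nodes (G : SpatialNetwork d) (ω : Set (Fin d → ℝ)) : Finset (Fin d → ℝ) :=
  G.N.filter (· ∈ ω)

/-- The neighbours of a node. -/
def nbhd (G : SpatialNetwork d) (x : Fin d → ℝ) : Finset (Fin d → ℝ) :=
  G.N.filter (G.Adj x)

/-- The diagonal mass `m_x = ½ Σ_{y∼x} |x−y|` at a node. -/
def mass (G : SpatialNetwork d) (x : Fin d → ℝ) : ℝ :=
  (1 / 2) * ∑ y ∈ G.nbhd x, eDist x y

/-- The bilinear form `(M_ω u, v)`. -/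
def Mbil (G : SpatialNetwork d) (ω : Set (Fin d → ℝ)) (u v : (Fin d → ℝ) → ℝ) : ℝ :=
  ∑ x ∈ G.nodes ω, G.mass x * u x * v x

/-- `|v|²_{M,ω}`. -/
def Msq (G : SpatialNetwork d) (ω : Set (Fin d → ℝ)) (v : (Fin d → ℝ) → ℝ) : ℝ :=
  G.Mbil ω v v

/-- `|v|²_{L,ω}`. -/
def Lsq (G : SpatialNetwork d) (ω : Set (Fin d → ℝ)) (v : (Fin d → ℝ) → ℝ) : ℝ :=
  ∑ x ∈ G.nodes ω, (1 / 2) * ∑ y ∈ G.nbhd x, (v x - v y) ^ 2 / eDist x y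

/-- `|v|_{M,ω}`. -/
def Mnorm (G : SpatialNetwork d) (ω : Set (Fin d → ℝ)) (v : (Fin d → ℝ) → ℝ) : ℝ :=
  Real.sqrt (G.Msq ω v)

/-- `|v|_{L,ω}`. -/
def Lnorm (G : SpatialNetwork d) (ω : Set (Fin d → ℝ)) (v : (Fin d → ℝ) → ℝ) : ℝ :=
  Real.sqrt (G.Lsq ω v)

/-- Membership in `V`: vanishing at the Dirichlet nodes `N ∩ Γ`. -/
def memV (G : SpatialNetwork d) (Γ : Set (Fin d → ℝ)) (v : (Fin d → ℝ) → ℝ) : Prop :=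
  ∀ x ∈ G.N, x ∈ Γ → v x = 0

/-- Assumption 3.1: homogeneity, locality, boundary density and connectivity at
scale `R₀`, with uniformity constant `σ` and density `ρ`. -/
structure Assumptions (G : SpatialNetwork d) (Γ : Set (Fin d → ℝ)) (R₀ σ ρ : ℝ) : Prop where
  R₀_pos : 0 < R₀
  σ_ge_one : 1 ≤ σ
  ρ_pos : 0 < ρ
  homogeneity_lower : ∀ R, R₀ ≤ R → ∀ x ∈ G.domain,
    ρ ≤ G.Msq (G.box R x) (fun _ => 1) / (2 * R) ^ d
  homogeneity_upper : ∀ R, R₀ ≤ R → ∀ x ∈ G.domain,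
    G.Msq (G.box R x) (fun _ => 1) / (2 * R) ^ d ≤ σ * ρ
  locality : ∀ x y, G.Adj x y → eDist x y < R₀
  boundary_density : ∀ y ∈ Γ, ∃ x ∈ G.N, x ∈ Γ ∧ eDist x y < R₀
  connectivity : ∀ R, R₀ ≤ R → ∀ x ∈ G.domain, ∃ A : (Fin d → ℝ) → (Fin d → ℝ) → Prop,
    (∀ a b, A a b → G.Adj a b) ∧
    (∀ a b, G.Adj a b → (a ∈ G.box R x ∨ b ∈ G.box R x) → A a b) ∧
    (∀ a b, A a b → a ∈ G.box (R + R₀) x ∧ b ∈ G.box (R + R₀) x) ∧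
    (∀ a b a' b', A a b → A a' b' → Relation.ReflTransGen A a a')

/-- The Friedrichs inequality of Lemma 3.2 holds with constant `μ`. -/
def Friedrichs (G : SpatialNetwork d) (Γ : Set (Fin d → ℝ)) (R₀ μ : ℝ) : Prop :=
  ∀ R, R₀ ≤ R → ∀ x ∈ G.domain, (∃ z ∈ G.N, z ∈ Γ ∧ z ∈ G.box R x) →
    ∀ v, G.memV Γ v →
      G.Mnorm (G.box R x) v ≤ μ * R * G.Lnorm (G.box (R + R₀) x) v

/-- The Poincaré inequality of Lemma 3.2 holds with constant `μ`. -/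
def Poincare (G : SpatialNetwork d) (R₀ μ : ℝ) : Prop :=
  ∀ R, R₀ ≤ R → ∀ x ∈ G.domain, ∀ v : (Fin d → ℝ) → ℝ, ∃ c : ℝ,
    G.Mnorm (G.box R x) (fun z => v z - c) ≤ μ * R * G.Lnorm (G.box (R + R₀) x) v

end SpatialNetwork

end NetPaper

theorem sq_mul_sub_mul_le {a b p q : ℝ} (hq : |q| ≤ 1) :
    (a * p - b * q) ^ 2 ≤ 2 * (a ^ 2 * (p - q) ^ 2 + (a - b) ^ 2) := by
  have hq2 : q ^ 2 * (a - b) ^ 2 ≤ (a - b) ^ 2 :=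
    mul_le_of_le_one_left (sq_nonneg _) (sq_le_one_iff_abs_le_one q |>.mpr hq)
  calc (a * p - b * q) ^ 2 = (a * (p - q) + q * (a - b)) ^ 2 := by ring
    _ ≤ 2 * ((a * (p - q)) ^ 2 + (q * (a - b)) ^ 2) := add_sq_le
    _ ≤ 2 * (a ^ 2 * (p - q) ^ 2 + (a - b) ^ 2) := by rw [mul_pow, mul_pow]; gcongr

namespace NetPaper

theorem eDist_pos {d : ℕ} {x y : Fin d → ℝ} (h : x ≠ y) : 0 < eDist x y := by
  obtain ⟨i, hi⟩ := Function.ne_iff.mp h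
  exact Real.sqrt_pos.mpr <| Finset.sum_pos' (fun j _ => sq_nonneg _)
    ⟨i, Finset.mem_univ i, sq_pos_of_ne_zero (sub_ne_zero.mpr hi)⟩

namespace SpatialNetwork

variable {d : ℕ} (G : SpatialNetwork d)

theorem Msq_eq_sum (ω : Set (Fin d → ℝ)) (v : (Fin d → ℝ) → ℝ) :
    G.Msq ω v = ∑ x ∈ G.nodes ω, (1 / 2) * ∑ y ∈ G.nbhd x, eDist x y * v x ^ 2 := by
  simp only [Msq, Mbil, mass, ← Finset.sum_mul]
  ring_nf

theorem Lsq_mul_le (ω : Set (Fin d → ℝ)) {K : ℝ} {φ : (Fin d → ℝ) → ℝ}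
    (hφ : ∀ z, |φ z| ≤ 1) (hφlip : ∀ x y, G.Adj x y → |φ x - φ y| ≤ K * eDist x y)
    (v : (Fin d → ℝ) → ℝ) :
    G.Lsq ω (fun z => v z * φ z) ≤ 2 * (K ^ 2 * G.Msq ω v + G.Lsq ω v) := by
  have edge : ∀ x, ∀ y ∈ G.nbhd x, (v x * φ x - v y * φ y) ^ 2 / eDist x y ≤
      2 * (K ^ 2 * (eDist x y * v x ^ 2) + (v x - v y) ^ 2 / eDist x y) := by
    intro x y hy
    have hadj : G.Adj x y := (Finset.mem_filter.mp hy).2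
    have he : 0 < eDist x y := eDist_pos (G.adj_ne x y hadj)
    have hdφ : (φ x - φ y) ^ 2 ≤ (K * eDist x y) ^ 2 :=
      sq_le_sq' (abs_le.mp (hφlip x y hadj)).1 (abs_le.mp (hφlip x y hadj)).2
    rw [div_le_iff₀ he]
    calc (v x * φ x - v y * φ y) ^ 2
        ≤ 2 * (v x ^ 2 * (φ x - φ y) ^ 2 + (v x - v y) ^ 2) := sq_mul_sub_mul_le (hφ y)
      _ ≤ 2 * (v x ^ 2 * (K * eDist x y) ^ 2 + (v x - v y) ^ 2) := by gcongr
      _ = _ := by field_simp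
  calc G.Lsq ω (fun z => v z * φ z)
      ≤ ∑ x ∈ G.nodes ω, (1 / 2) * ∑ y ∈ G.nbhd x,
          2 * (K ^ 2 * (eDist x y * v x ^ 2) + (v x - v y) ^ 2 / eDist x y) := by
        unfold Lsq
        gcongr with x _ y hy
        exact edge x y hy
    _ = 2 * (K ^ 2 * G.Msq ω v + G.Lsq ω v) := by
        simp only [Msq_eq_sum, Lsq, mul_add, Finset.mul_sum, ← Finset.sum_add_distrib]
        exact Finset.sum_congr rfl fun x _ => Finset.sum_congr rfl fun y _ => by ring

end SpatialNetwork

end NetPaper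

open NetPaper NetPaper.SpatialNetwork

theorem discrete_product_rule_general
    {d : ℕ} (G : SpatialNetwork d) (ω : Set (Fin d → ℝ)) (H : ℝ)
    (φ : (Fin d → ℝ) → ℝ)
    (hφ01 : ∀ z, 0 ≤ φ z ∧ φ z ≤ 1)
    (hφlip : ∀ x y, G.Adj x y → |φ x - φ y| ≤ H⁻¹ * eDist x y)
    (v : (Fin d → ℝ) → ℝ) :
    G.Lsq ω (fun z => v z * φ z) ≤ 2 * (H⁻¹ ^ 2 * G.Msq ω v + G.Lsq ω v) :=
  G.Lsq_mul_le ω (fun z => abs_le.mpr ⟨by linarith [(hφ01 z).1], (hφ01 z).2⟩) hφlip v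

/-- **Discrete product rule (inequality (4.4)).**
If `0 ≤ φ ≤ 1` and `|φ(x) − φ(y)| ≤ H⁻¹|x − y|` for all adjacent nodes
`x ∼ y`, then `|vφ|²_{L,ω} ≤ 2(H⁻²|v|²_{M,ω} + |v|²_{L,ω})` for every
`v : N → ℝ` and every `ω ⊆ Ω`. -/
theorem discrete_product_rule
    {d : ℕ} (G : SpatialNetwork d) (ω : Set (Fin d → ℝ)) (H : ℝ) (hH : 0 < H)
    (φ : (Fin d → ℝ) → ℝ)
    (hφ01 : ∀ z, 0 ≤ φ z ∧ φ z ≤ 1)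
    (hφlip : ∀ x y, G.Adj x y → |φ x - φ y| ≤ H⁻¹ * eDist x y)
    (v : (Fin d → ℝ) → ℝ) :
    G.Lsq ω (fun z => v z * φ z) ≤ 2 * (H⁻¹ ^ 2 * G.Msq ω v + G.Lsq ω v) :=
  discrete_product_rule_general G ω H φ hφ01 hφlip v
end
end

section
/- Let d ≥ 1, r = 1/(4d), H > 0, and let T = [0,H]^d with corners y_1,…,y_{2^d} indexed by {0,1}^d (y_1 the origin), φ_1,…,φ_{2^d} the multilinear (Q1) Lagrange basis functions of T with φ_i(y_j) = δ_{ij}, and T̂_ℓ = {z ∈ T : y_ℓ + (z − y_ℓ)/r ∈ T} the r-scaled corner box at y_ℓ. Then for any choice of points x_ℓ ∈ T̂_ℓ, ℓ = 1,…,2^d, the symmetric matrix G ∈ ℝ^{2^d × 2^d} with entries G_{ij} = Σ_{ℓ=1}^{2^d} φ_i(x_ℓ)φ_j(x_ℓ) has all eigenvalues bounded below by 11/8 − e^{1/4} > 0. -/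
noncomputable section

namespace CubeQ1

variable {d : ℕ}

/-- The corner of the cube `[0,H]^d` selected by `b : Fin d → Bool`
(`b s = true` means the `s`-th coordinate is `H`). -/
def corner (H : ℝ) (b : Fin d → Bool) : Fin d → ℝ := fun s => if b s then H else 0

/-- The multilinear (Q1) Lagrange basis function of the cube `[0,H]^d`
associated with the corner `b`. -/
def q1 (H : ℝ) (b : Fin d → Bool) (z : Fin d → ℝ) : ℝ :=
  ∏ s, if b s then z s / H else 1 - z s / H

/-- The cube `T = [0,H]^d`. -/
def cube (d : ℕ) (H : ℝ) : Set (Fin d → ℝ) := {z | ∀ s, 0 ≤ z s ∧ z s ≤ H}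

/-- The `r`-scaled corner box `T̂_ℓ = {z ∈ T : y_ℓ + (z − y_ℓ)/r ∈ T}` at the
corner `y_ℓ` of `T = [0,H]^d`. -/
def cornerBox (H r : ℝ) (b : Fin d → Bool) : Set (Fin d → ℝ) :=
  {z | z ∈ cube d H ∧ ∀ s, 0 ≤ corner H b s + (z s - corner H b s) / r ∧
      corner H b s + (z s - corner H b s) / r ≤ H}

end CubeQ1

open CubeQ1

open Finset Matrix

/-!
Write `G = PᵀP` with `P_{ℓi} = φ_i(x_ℓ) ≥ 0`. Since the `φ_i` form a partition of unity, row `i`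
of `G` sums to `Σ_ℓ φ_i(x_ℓ)`, so the Gershgorin margin `G_ii − Σ_{j≠i} |G_ij|` of row `i` is
`Σ_ℓ (2φ_i(x_ℓ)² − φ_i(x_ℓ))`. On its own corner box `φ_i ≥ (1−r)^d ≥ 3/4`, which contributes at
least `3/8`; on the box at a corner differing from `y_i` in `k` coordinates `φ_i ≤ r^k`, so the
remaining terms cost at most `(1+r)^d − 1 ≤ e^{dr} − 1 = e^{1/4} − 1`.
-/

theorem Real.one_add_pow_le_exp_mul {r : ℝ} (hr : -1 ≤ r) (n : ℕ) :
    (1 + r) ^ n ≤ Real.exp (n * r) := by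
  rw [Real.exp_nat_mul]
  exact pow_le_pow_left₀ (by linarith) (by linarith [Real.add_one_le_exp r]) n

theorem Real.exp_one_div_four_lt : Real.exp (1 / 4) < 11 / 8 := by
  have h := Real.exp_bound' (x := 1 / 4) (by norm_num) (by norm_num) (n := 2) (by norm_num)
  norm_num [Finset.sum_range_succ] at h
  linarith

theorem Matrix.exists_diag_sub_sum_abs_le_of_mulVec_eq_smul {n : Type*} [Fintype n]
    [DecidableEq n] {A : Matrix n n ℝ} {μ : ℝ} {v : n → ℝ} (hv : v ≠ 0)
    (hAv : A.mulVec v = μ • v) : ∃ k, A k k - ∑ j ∈ univ.erase k, |A k j| ≤ μ := by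
  have hμ : Module.End.HasEigenvalue (Matrix.toLin' A) μ :=
    Module.End.hasEigenvalue_of_hasEigenvector
      ⟨Module.End.mem_eigenspace_iff.mpr (by rw [Matrix.toLin'_apply, hAv]), hv⟩
  obtain ⟨k, hk⟩ := eigenvalue_mem_ball hμ
  simp only [Metric.mem_closedBall, Real.dist_eq, Real.norm_eq_abs] at hk
  exact ⟨k, by linarith [neg_abs_le (μ - A k k)]⟩

theorem Matrix.transpose_mul_self_diag_sub_sum_abs_eq {κ ι : Type*} [Fintype κ] [Fintype ι]
    [DecidableEq ι] {P : Matrix κ ι ℝ} (hP0 : ∀ ℓ i, 0 ≤ P ℓ i) (hP1 : ∀ ℓ, ∑ i, P ℓ i = 1)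
    (i : ι) :
    (Pᵀ * P) i i - ∑ j ∈ univ.erase i, |(Pᵀ * P) i j| = ∑ ℓ, (2 * P ℓ i ^ 2 - P ℓ i) := by
  have hnonneg (j : ι) : 0 ≤ (Pᵀ * P) i j :=
    sum_nonneg fun ℓ _ => mul_nonneg (hP0 ℓ i) (hP0 ℓ j)
  have hrow : ∑ j, (Pᵀ * P) i j = ∑ ℓ, P ℓ i := by
    simp only [Matrix.mul_apply, Matrix.transpose_apply]
    rw [sum_comm]
    simp only [← mul_sum, hP1, mul_one]
  simp_rw [abs_of_nonneg (hnonneg _)]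
  rw [sum_erase_eq_sub (mem_univ i), hrow]
  simp only [Matrix.mul_apply, Matrix.transpose_apply, sum_sub_distrib, ← mul_sum, sq]
  ring

theorem sum_two_mul_sq_sub_self_ge {κ : Type*} [Fintype κ] [DecidableEq κ] (p : κ → ℝ)
    (k : κ) :
    2 * p k ^ 2 - p k - ∑ ℓ ∈ univ.erase k, p ℓ ≤ ∑ ℓ, (2 * p ℓ ^ 2 - p ℓ) := by
  rw [← add_sum_erase _ _ (mem_univ k), sub_eq_add_neg _ (∑ ℓ ∈ _, _), ← sum_neg_distrib]
  gcongr with ℓ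
  nlinarith [sq_nonneg (p ℓ)]

namespace CubeQ1

variable {d : ℕ} {H r : ℝ}

def q1Factor (H : ℝ) (c : Bool) (t : ℝ) : ℝ := if c then t / H else 1 - t / H

theorem q1_eq_prod_q1Factor (b : Fin d → Bool) (z : Fin d → ℝ) :
    q1 H b z = ∏ s, q1Factor H (b s) (z s) := rfl

theorem q1Factor_add_q1Factor_not (c : Bool) (t : ℝ) :
    q1Factor H c t + q1Factor H (!c) t = 1 := by
  cases c <;> simp [q1Factor]

theorem sum_q1 (z : Fin d → ℝ) : ∑ b, q1 H b z = 1 := by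
  calc ∑ b, q1 H b z = ∏ s, ∑ c, q1Factor H c (z s) :=
        (Fintype.prod_sum fun s c => q1Factor H c (z s)).symm
    _ = 1 := prod_eq_one fun s _ => by
        rw [Fintype.sum_bool]; exact q1Factor_add_q1Factor_not true (z s)

theorem q1Factor_mem_Icc (hH : 0 < H) (c : Bool) {t : ℝ} (ht : t ∈ Set.Icc 0 H) :
    q1Factor H c t ∈ Set.Icc 0 1 := by
  have h0 : 0 ≤ t / H := div_nonneg ht.1 hH.le
  have h1 : t / H ≤ 1 := (div_le_one hH).mpr ht.2
  cases c <;> simp only [q1Factor, Bool.false_eq_true, if_true, if_false, Set.mem_Icc] <;>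
    constructor <;> linarith

theorem q1_nonneg (hH : 0 < H) (b : Fin d → Bool) {z : Fin d → ℝ} (hz : z ∈ cube d H) :
    0 ≤ q1 H b z :=
  prod_nonneg fun s _ => (q1Factor_mem_Icc hH (b s) (hz s)).1

theorem one_sub_le_q1Factor_of_mem_cornerBox (hH : 0 < H) (hr : 0 < r) {b : Fin d → Bool}
    {z : Fin d → ℝ} (hz : z ∈ cornerBox H r b) (s : Fin d) :
    1 - r ≤ q1Factor H (b s) (z s) := by
  obtain ⟨hlo, hhi⟩ := hz.2 s
  cases hb : b s <;> simp only [corner, q1Factor, hb, Bool.false_eq_true, if_true, if_false]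
    at hlo hhi ⊢
  · have hzr : z s ≤ H * r := by rw [sub_zero, zero_add, div_le_iff₀ hr] at hhi; exact hhi
    have : z s / H ≤ r := by rw [div_le_iff₀ hH]; linarith
    linarith
  · have hzr : -H ≤ (z s - H) / r := by linarith
    rw [le_div_iff₀ hr] at hzr
    rw [le_div_iff₀ hH]
    linarith

theorem q1Factor_not_le_of_mem_cornerBox (hH : 0 < H) (hr : 0 < r) {b : Fin d → Bool}
    {z : Fin d → ℝ} (hz : z ∈ cornerBox H r b) (s : Fin d) :
    q1Factor H (!b s) (z s) ≤ r := by
  linarith [q1Factor_add_q1Factor_not (H := H) (b s) (z s),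
    one_sub_le_q1Factor_of_mem_cornerBox hH hr hz s]

theorem one_sub_pow_le_q1_of_mem_cornerBox (hH : 0 < H) (hr : 0 < r) (hr1 : r ≤ 1)
    {b : Fin d → Bool} {z : Fin d → ℝ} (hz : z ∈ cornerBox H r b) :
    (1 - r) ^ d ≤ q1 H b z := by
  rw [q1_eq_prod_q1Factor, ← Fin.prod_const]
  exact prod_le_prod (fun _ _ => by linarith) fun s _ =>
    one_sub_le_q1Factor_of_mem_cornerBox hH hr hz s

theorem q1_le_prod_of_mem_cornerBox (hH : 0 < H) (hr : 0 < r) {ℓ : Fin d → Bool}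
    {z : Fin d → ℝ} (hz : z ∈ cornerBox H r ℓ) (i : Fin d → Bool) :
    q1 H i z ≤ ∏ s, if i s = ℓ s then 1 else r := by
  refine prod_le_prod (fun s _ => (q1Factor_mem_Icc hH (i s) (hz.1 s)).1) fun s _ => ?_
  change q1Factor H (i s) (z s) ≤ _
  by_cases h : i s = ℓ s
  · rw [if_pos h]
    exact (q1Factor_mem_Icc hH (i s) (hz.1 s)).2
  · rw [if_neg h, Bool.eq_not.mpr h]
    exact q1Factor_not_le_of_mem_cornerBox hH hr hz s

theorem sum_prod_ite_eq (i : Fin d → Bool) (r : ℝ) :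
    ∑ ℓ : Fin d → Bool, ∏ s, (if i s = ℓ s then 1 else r) = (1 + r) ^ d := by
  rw [← Fintype.prod_sum (fun s c => if i s = c then 1 else r), ← Fin.prod_const]
  refine prod_congr rfl fun s _ => ?_
  cases i s <;> simp [add_comm]

theorem sum_erase_q1_le (hH : 0 < H) (hr : 0 < r) {x : (Fin d → Bool) → Fin d → ℝ}
    (hx : ∀ ℓ, x ℓ ∈ cornerBox H r ℓ) (i : Fin d → Bool) :
    ∑ ℓ ∈ univ.erase i, q1 H i (x ℓ) ≤ (1 + r) ^ d - 1 := by
  calc ∑ ℓ ∈ univ.erase i, q1 H i (x ℓ)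
      ≤ ∑ ℓ ∈ univ.erase i, ∏ s, (if i s = ℓ s then 1 else r) :=
        sum_le_sum fun ℓ _ => q1_le_prod_of_mem_cornerBox hH hr (hx ℓ) i
    _ = (1 + r) ^ d - 1 := by
        rw [sum_erase_eq_sub (mem_univ i), sum_prod_ite_eq]
        simp

end CubeQ1

/-- **Gershgorin bound for the corner Gram matrix (core of Lemma 3.5).**
For `d ≥ 1`, `r = 1/(4d)`, `H > 0` and any points `x_ℓ ∈ T̂_ℓ` in the
`r`-scaled corner boxes of `T = [0,H]^d`, the symmetric matrix
`G_{ij} = Σ_ℓ φ_i(x_ℓ) φ_j(x_ℓ)` built from the Q1 Lagrange basis functions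
has all eigenvalues bounded below by `11/8 − e^{1/4} > 0`. -/
theorem corner_gram_matrix_eigenvalue_bound
    (d : ℕ) (hd : 1 ≤ d) (H : ℝ) (hH : 0 < H)
    (x : (Fin d → Bool) → (Fin d → ℝ))
    (hx : ∀ b, x b ∈ cornerBox H (1 / (4 * (d : ℝ))) b)
    (G : Matrix (Fin d → Bool) (Fin d → Bool) ℝ)
    (hG : ∀ i j, G i j = ∑ ℓ : Fin d → Bool, q1 H i (x ℓ) * q1 H j (x ℓ)) :
    G.IsSymm ∧ (0 : ℝ) < 11 / 8 - Real.exp (1 / 4) ∧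
      ∀ (lam : ℝ) (v : (Fin d → Bool) → ℝ), v ≠ 0 → G.mulVec v = lam • v →
        11 / 8 - Real.exp (1 / 4) ≤ lam := by
  set r : ℝ := 1 / (4 * (d : ℝ))
  have hd1 : (1 : ℝ) ≤ d := by exact_mod_cast hd
  have hr0 : 0 < r := by positivity
  have hr1 : r ≤ 1 := by rw [div_le_one (by positivity)]; linarith
  have hdr : (d : ℝ) * r = 1 / 4 := by simp only [r]; field_simp
  set P : Matrix (Fin d → Bool) (Fin d → Bool) ℝ := of fun ℓ i => q1 H i (x ℓ)
  have hGP : G = Pᵀ * P := by ext i j; simp [hG, P, mul_apply]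
  refine ⟨hGP ▸ isSymm_transpose_mul_self P, by linarith [Real.exp_one_div_four_lt],
    fun lam v hv hGv => ?_⟩
  obtain ⟨i, hi⟩ := exists_diag_sub_sum_abs_le_of_mulVec_eq_smul hv hGv
  rw [hGP, transpose_mul_self_diag_sub_sum_abs_eq (P := P) (fun ℓ j => q1_nonneg hH j (hx ℓ).1)
    (fun ℓ => sum_q1 (x ℓ))] at hi
  have hdiag : 3 / 4 ≤ q1 H i (x i) :=
    calc 3 / 4 = 1 + d * (-r) := by linarith
      _ ≤ (1 + -r) ^ d := one_add_mul_le_pow (by linarith) d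
      _ = (1 - r) ^ d := by rw [← sub_eq_add_neg]
      _ ≤ q1 H i (x i) := one_sub_pow_le_q1_of_mem_cornerBox hH hr0 hr1 (hx i)
  have hoff : ∑ ℓ ∈ univ.erase i, q1 H i (x ℓ) ≤ Real.exp (1 / 4) - 1 := by
    have := Real.one_add_pow_le_exp_mul (r := r) (by linarith) d
    rw [hdr] at this
    linarith [sum_erase_q1_le hH hr0 hx i]
  have hsum := sum_two_mul_sq_sub_self_ge (fun ℓ => q1 H i (x ℓ)) i
  simp only [P, of_apply] at hi hsum
  have hpeak : 3 / 8 ≤ 2 * q1 H i (x i) ^ 2 - q1 H i (x i) := by nlinarith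
  linarith
end
end

section
/- Let d ≥ 1, r ∈ (0,1), H > 0, T = [0,H]^d with corners y_1,…,y_{2^d} indexed by {0,1}^d (y_1 the origin), φ_1(z) = ∏_{s=1}^d (1 − z_s/H), and T̂_ℓ the r-scaled corner box at y_ℓ. Then for any points x_ℓ ∈ T̂_ℓ, ℓ = 2,…,2^d, it holds that Σ_{ℓ=2}^{2^d} φ_1(x_ℓ) ≤ (1 + r)^d − 1. -/
noncomputable section

open CubeQ1

/-- **Off-corner sum bound for the Q1 basis function.**
For any points `x_ℓ ∈ T̂_ℓ` in the `r`-scaled corner boxes at the corners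
`y_ℓ ≠ y₁` of `T = [0,H]^d`, we have `Σ_{ℓ≠1} φ₁(x_ℓ) ≤ (1 + r)^d − 1`. -/
theorem q1_off_corner_sum_bound
    (d : ℕ) (hd : 1 ≤ d) (r H : ℝ) (hr : 0 < r) (hr1 : r < 1) (hH : 0 < H)
    (x : (Fin d → Bool) → (Fin d → ℝ))
    (hx : ∀ b : Fin d → Bool, b ≠ (fun _ => false) → x b ∈ cornerBox H r b) :
    ∑ b ∈ Finset.univ.erase (fun _ => false),
      q1 H (fun _ => false) (x b) ≤ (1 + r) ^ d - 1 := by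

  have hstep : ∑ b ∈ Finset.univ.erase (fun _ : Fin d => false),
      q1 H (fun _ => false) (x b)
      ≤ ∑ b ∈ Finset.univ.erase (fun _ : Fin d => false),
        ∏ s, (if b s then r else (1:ℝ)) := by
    apply Finset.sum_le_sum
    intro b hb
    have hb' : b ≠ fun _ => false := (Finset.mem_erase.mp hb).1
    obtain ⟨hcube, hbox⟩ := hx b hb'
    unfold q1
    apply Finset.prod_le_prod
    · intro s _
      simp only [if_neg Bool.false_ne_true]
      have h := (hcube s).2
      have : x b s / H ≤ 1 := (div_le_one hH).mpr h
      linarith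
    · intro s _
      simp only [if_neg Bool.false_ne_true]
      by_cases hbs : b s
      · rw [if_pos hbs]
        have h1 := (hbox s).1
        simp only [corner, hbs, if_true] at h1
        have h2 : -H ≤ (x b s - H) / r := by linarith
        have h3 : -H * r ≤ x b s - H := (le_div_iff₀ hr).mp h2
        have h4 : (1 - r) ≤ x b s / H := (le_div_iff₀ hH).mpr (by nlinarith)
        linarith
      · rw [if_neg hbs]
        have h0 := (hcube s).1
        have : 0 ≤ x b s / H := div_nonneg h0 hH.le
        linarith
  have hsum : ∑ b : (Fin d → Bool), ∏ s, (if b s then r else (1:ℝ)) = (1+r)^d := by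
    have h := Finset.prod_univ_sum (fun _ : Fin d => (Finset.univ : Finset Bool))
      (fun _ j => if j then r else (1:ℝ))
    rw [Fintype.piFinset_univ] at h
    rw [← h]
    simp [Fintype.sum_bool, add_comm]
  have hmem : (fun _ : Fin d => false) ∈ (Finset.univ : Finset (Fin d → Bool)) := Finset.mem_univ _
  have herase : ∑ b ∈ Finset.univ.erase (fun _ : Fin d => false),
      ∏ s, (if b s then r else (1:ℝ)) = (1+r)^d - 1 := by
    rw [Finset.sum_erase_eq_sub hmem, hsum]
    simp
  linarith [hstep, herase.le, herase.ge]
end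
end
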